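/- Let S = {±e_0,...,±e_{f-1}} ⊂ Z^f. Suppose J, J' ⊆ S satisfy ω_J = ω_{J'} and k_i(J') ≥ k_i(J) for all i with k(J') ≠ k(J). Then J ⊂ J'. (More precisely, for each i, either J' ∩ {±e_{i-1}} = J ∩ {±e_{i-1}}, or J ∩ {±e_{i-1}} = ∅.) -/

import Mathlib

/-!
Everything happens one coordinate at a time: the `l`-th coordinate of `ω_J` and `k_{l+1}(J)`
only see the signs `A = {b | (l, b) ∈ J} ⊆ {+, -}`. Among the four such sets, equal signed sums
and `#A ≤ #A'` force `A' = A` or `A = ∅`, and these fibrewise statements assemble to `J ⊆ J'`;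
the inclusion is strict because `k(J) ≠ k(J')`.
-/

namespace SignedSubsets8

variable (f : ℕ) [NeZero f]

/-- A subset `J ⊆ S = {±e_0,…,±e_{f-1}}` is modelled as a `Finset (Fin f × Bool)`,
`(l, true) ↦ +e_l`, `(l, false) ↦ -e_l`.  `ω_J ∈ ℤ^f` is the signed sum of `J`. -/
def omegaJ (J : Finset (Fin f × Bool)) : Fin f → ℤ := fun i =>
  ∑ x ∈ J, if x.1 = i then (if x.2 then 1 else -1) else 0

/-- `k_i(J) = #(J ∩ {±e_{i-1}}) ∈ {0,1,2}`. -/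
def kvec (J : Finset (Fin f × Bool)) : Fin f → ℕ := fun i =>
  (J.filter fun x => x.1 = i - 1).card

open Finset

def signedCard (s : Finset Bool) : ℤ := ∑ b ∈ s, if b then 1 else -1

theorem eq_or_eq_empty_of_signedCard_eq_of_card_le :
    ∀ s t : Finset Bool, signedCard s = signedCard t → #s ≤ #t → t = s ∨ s = ∅ := by
  decide

section Fibres

variable {ι : Type*} [DecidableEq ι]

def signsAt (J : Finset (ι × Bool)) (l : ι) : Finset Bool := univ.filter fun b => (l, b) ∈ J

theorem filter_fst_eq_map_signsAt (J : Finset (ι × Bool)) (l : ι) :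
    J.filter (·.1 = l) = (signsAt J l).map (Function.Embedding.sectR l Bool) := by
  ext ⟨a, b⟩
  simp only [mem_filter, mem_map, signsAt, mem_univ, true_and, Function.Embedding.sectR_apply,
    Prod.mk.injEq]
  constructor
  · rintro ⟨hx, rfl⟩
    exact ⟨b, hx, rfl, rfl⟩
  · rintro ⟨b, hx, rfl, rfl⟩
    exact ⟨hx, rfl⟩

theorem card_filter_fst_eq (J : Finset (ι × Bool)) (l : ι) :
    #(J.filter (·.1 = l)) = #(signsAt J l) := by
  rw [filter_fst_eq_map_signsAt, card_map]

theorem filter_fst_eq_or_eq_empty {J J' : Finset (ι × Bool)} {l : ι}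
    (hω : signedCard (signsAt J l) = signedCard (signsAt J' l))
    (hk : #(J.filter (·.1 = l)) ≤ #(J'.filter (·.1 = l))) :
    J'.filter (·.1 = l) = J.filter (·.1 = l) ∨ J.filter (·.1 = l) = ∅ := by
  rw [card_filter_fst_eq, card_filter_fst_eq] at hk
  simp only [filter_fst_eq_map_signsAt, map_inj, map_eq_empty]
  exact eq_or_eq_empty_of_signedCard_eq_of_card_le _ _ hω hk

theorem subset_of_forall_filter_fst {J J' : Finset (ι × Bool)}
    (h : ∀ l, J'.filter (·.1 = l) = J.filter (·.1 = l) ∨ J.filter (·.1 = l) = ∅) :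
    J ⊆ J' := by
  intro x hx
  have hx' : x ∈ J.filter (·.1 = x.1) := mem_filter.2 ⟨hx, rfl⟩
  rcases h x.1 with h | h
  · exact (mem_filter.1 (h ▸ hx')).1
  · simp [h] at hx'

end Fibres

theorem omegaJ_apply {n : ℕ} (J : Finset (Fin n × Bool)) (l : Fin n) :
    omegaJ n J l = signedCard (signsAt J l) := by
  rw [omegaJ, ← sum_filter, filter_fst_eq_map_signsAt, sum_map]
  rfl

theorem ssubset_of_omega_eq_kvec_le
    (J J' : Finset (Fin f × Bool))
    (hω : omegaJ f J = omegaJ f J')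
    (hk : ∀ i, kvec f J i ≤ kvec f J' i)
    (hne : kvec f J ≠ kvec f J') :
    J ⊂ J' ∧ ∀ i : Fin f,
      (J'.filter fun x => x.1 = i - 1) = (J.filter fun x => x.1 = i - 1) ∨
      (J.filter fun x => x.1 = i - 1) = ∅ := by
  have hfibre : ∀ l : Fin f,
      J'.filter (·.1 = l) = J.filter (·.1 = l) ∨ J.filter (·.1 = l) = ∅ := fun l =>
    filter_fst_eq_or_eq_empty (by rw [← omegaJ_apply, ← omegaJ_apply, hω])
      (by simpa only [kvec, add_sub_cancel_right] using hk (l + 1))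
  have hsub : J ⊆ J' := subset_of_forall_filter_fst hfibre
  refine ⟨Finset.ssubset_iff_subset_ne.2 ⟨hsub, ?_⟩, fun i => hfibre (i - 1)⟩
  rintro rfl
  exact hne rfl

end SignedSubsets8
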